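/- arXiv:1103.1292 — 2 statements merged into one kernel-verified Lean document; each statement's English description precedes it below -/
import Mathlib

section
/- For every N ≥ 4 and every ζ = (ξ,η) ∈ ℝ² with ξ ∈ [7N/4, 9N/4] and η ∈ [−2N², 7N²], the set k_ζ = {ζ₁ ∈ ℝ² : (ζ₁ ∈ B_N and ζ − ζ₁ ∈ A_N) or (ζ₁ ∈ A_N and ζ − ζ₁ ∈ B_N)} has two-dimensional Lebesgue measure at least N³/4. -/
open MeasureTheory Real Set

noncomputable section

/-- Japanese bracket of a real number: `⟨x⟩ = 1 + |x|`. -/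
def jb (x : ℝ) : ℝ := 1 + |x|

/-- Japanese bracket of a complex number: `⟨z⟩ = 1 + |z|`. -/
def jbC (z : ℂ) : ℝ := 1 + ‖z‖

/-- Dissipative symbol `ϱ(ξ) = ξ⁴ − ξ²`. -/
def rho (ξ : ℝ) : ℝ := ξ ^ 4 - ξ ^ 2

/-- KP dispersion symbol `P(ξ,η) = ξ³ − ε η²/ξ`. -/
def Psymb (ε ξ η : ℝ) : ℝ := ξ ^ 3 - ε * η ^ 2 / ξ

/-- Fourier transform on ℝ², normalized `φ̂(ζ) = ∫ φ(z) e^{-i z·ζ} dz`. -/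
def FT2 (φ : ℝ × ℝ → ℂ) (ζ : ℝ × ℝ) : ℂ :=
  ∫ z : ℝ × ℝ, φ z * Complex.exp (-Complex.I * ((z.1 * ζ.1 + z.2 * ζ.2 : ℝ) : ℂ))

/-- Space-time Fourier transform on `ℝ³ = ℝ_t × ℝ_x × ℝ_y` (`t ↔ τ`, `(x,y) ↔ (ξ,η)`). -/
def FT3 (f : ℝ × ℝ × ℝ → ℂ) (p : ℝ × ℝ × ℝ) : ℂ :=
  ∫ q : ℝ × ℝ × ℝ,
    f q * Complex.exp (-Complex.I * ((q.1 * p.1 + q.2.1 * p.2.1 + q.2.2 * p.2.2 : ℝ) : ℂ))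

/-- Fourier transform on ℝ. -/
def FT1 (g : ℝ → ℂ) (τ : ℝ) : ℂ := ∫ t : ℝ, g t * Complex.exp (-Complex.I * ((t * τ : ℝ) : ℂ))

/-- Anisotropic Sobolev norm `‖φ‖_{H^{s₁,s₂}}`. -/
def HNorm (s₁ s₂ : ℝ) (φ : ℝ × ℝ → ℂ) : ℝ :=
  Real.sqrt (∫ ζ : ℝ × ℝ, jb ζ.1 ^ (2 * s₁) * jb ζ.2 ^ (2 * s₂) * ‖FT2 φ ζ‖ ^ 2)

/-- Frequency-side anisotropic Sobolev norm: `HNormF s₁ s₂ φ̂ = ‖φ‖_{H^{s₁,s₂}}`,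
the argument being the Fourier transform of the function. -/
def HNormF (s₁ s₂ : ℝ) (g : ℝ × ℝ → ℂ) : ℝ :=
  Real.sqrt (∫ ζ : ℝ × ℝ, jb ζ.1 ^ (2 * s₁) * jb ζ.2 ^ (2 * s₂) * ‖g ζ‖ ^ 2)

/-- Weight of the Bourgain norm `X^{b,s₁,s₂}`:
`⟨i(τ − P(ξ,η)) + ϱ(ξ)⟩^{2b} ⟨ξ⟩^{2s₁} ⟨η⟩^{2s₂}` at `p = (τ,ξ,η)`. -/
def Xweight (ε b s₁ s₂ : ℝ) (p : ℝ × ℝ × ℝ) : ℝ :=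
  jbC (Complex.I * ((p.1 - Psymb ε p.2.1 p.2.2 : ℝ) : ℂ) + ((rho p.2.1 : ℝ) : ℂ)) ^ (2 * b) *
    jb p.2.1 ^ (2 * s₁) * jb p.2.2 ^ (2 * s₂)

/-- Bourgain norm `‖f‖_{X^{b,s₁,s₂}}`. -/
def XNorm (ε b s₁ s₂ : ℝ) (f : ℝ × ℝ × ℝ → ℂ) : ℝ :=
  Real.sqrt (∫ p : ℝ × ℝ × ℝ, Xweight ε b s₁ s₂ p * ‖FT3 f p‖ ^ 2)

/-- `θ` is an admissible time cutoff: `θ ∈ C₀^∞(ℝ)`, `supp θ ⊆ [−2,2]`, `θ ≡ 1` on `[−1,1]`. -/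
def IsCutoff (θ : ℝ → ℝ) : Prop :=
  ContDiff ℝ (⊤ : ℕ∞) θ ∧ Function.support θ ⊆ Set.Icc (-2) 2 ∧ ∀ t ∈ Set.Icc (-1 : ℝ) 1, θ t = 1

/-- The free DMKP semigroup `W(t)`, realized via Fourier inversion:
`(W(t)φ)^(ξ,η) = e^{itP(ξ,η) − |t|ϱ(ξ)} φ̂(ξ,η)`. -/
def Wfree (ε : ℝ) (t : ℝ) (φ : ℝ × ℝ → ℂ) (z : ℝ × ℝ) : ℂ :=
  (((2 * Real.pi) ^ 2 : ℝ) : ℂ)⁻¹ *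
    ∫ ζ : ℝ × ℝ,
      Complex.exp (Complex.I * ((t * Psymb ε ζ.1 ζ.2 : ℝ) : ℂ) - ((|t| * rho ζ.1 : ℝ) : ℂ)) *
        FT2 φ ζ * Complex.exp (Complex.I * ((z.1 * ζ.1 + z.2 * ζ.2 : ℝ) : ℂ))

/-- L² norm on ℝ³. -/
def L2N (u : ℝ × ℝ × ℝ → ℂ) : ℝ := Real.sqrt (∫ p : ℝ × ℝ × ℝ, ‖u p‖ ^ 2)

/-- Derivative `∂ₓ` in the `x` (second) variable of a function on `ℝ³ = ℝ_t × ℝ_x × ℝ_y`. -/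
def dX (f : ℝ × ℝ × ℝ → ℂ) (p : ℝ × ℝ × ℝ) : ℂ := fderiv ℝ f p ((0 : ℝ), (1 : ℝ), (0 : ℝ))

/-- The operator `Λ = (1/2)∂ₓ + ∂ₓ²`. -/
def Lam (f : ℝ × ℝ × ℝ → ℂ) (p : ℝ × ℝ × ℝ) : ℂ := (1 / 2 : ℂ) * dX f p + dX (dX f) p

/-- The rectangle `A_N = [N/2, N] × [−6N², 6N²]`. -/
def AN (N : ℝ) : Set (ℝ × ℝ) := Set.Icc (N / 2) N ×ˢ Set.Icc (-6 * N ^ 2) (6 * N ^ 2)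

/-- The rectangle `B_N = [N, 2N] × [2N², 3N²]`. -/
def BN (N : ℝ) : Set (ℝ × ℝ) := Set.Icc N (2 * N) ×ˢ Set.Icc (2 * N ^ 2) (3 * N ^ 2)

theorem stmt15 (N : ℝ) (hN : 4 ≤ N) (ζ : ℝ × ℝ)
    (hξ : ζ.1 ∈ Set.Icc (7 * N / 4) (9 * N / 4))
    (hη : ζ.2 ∈ Set.Icc (-2 * N ^ 2) (7 * N ^ 2)) :
    ENNReal.ofReal (N ^ 3 / 4) ≤
      volume {ζ₁ : ℝ × ℝ | (ζ₁ ∈ BN N ∧ ζ - ζ₁ ∈ AN N) ∨ (ζ₁ ∈ AN N ∧ ζ - ζ₁ ∈ BN N)} := by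
  obtain ⟨hξ1, hξ2⟩ := hξ
  obtain ⟨hη1, hη2⟩ := hη
  have hN0 : (0 : ℝ) < N := by linarith
  set a : ℝ := max N (ζ.1 - N) with ha
  set b : ℝ := ζ.1 - N / 2 with hb
  have hab : N / 4 ≤ b - a := by
    rcases max_cases N (ζ.1 - N) with ⟨h, h'⟩ | ⟨h, h'⟩ <;> rw [ha, h] <;> nlinarith
  have hsub : Set.Icc a b ×ˢ Set.Icc (2 * N ^ 2) (3 * N ^ 2) ⊆
      {ζ₁ : ℝ × ℝ | (ζ₁ ∈ BN N ∧ ζ - ζ₁ ∈ AN N) ∨ (ζ₁ ∈ AN N ∧ ζ - ζ₁ ∈ BN N)} := by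
    rintro ⟨x, y⟩ ⟨⟨hx1, hx2⟩, ⟨hy1, hy2⟩⟩
    dsimp only at hx1 hx2 hy1 hy2
    rw [hb] at hx2
    rw [ha] at hx1
    have hax : N ≤ x := le_trans (le_max_left _ _) hx1
    have hax2 : ζ.1 - N ≤ x := le_trans (le_max_right _ _) hx1
    have h2N : x ≤ 2 * N := by linarith
    have hA1 : N / 2 ≤ ζ.1 - x := by linarith
    have hA2 : ζ.1 - x ≤ N := by linarith
    have hA3 : -6 * N ^ 2 ≤ ζ.2 - y := by nlinarith
    have hA4 : ζ.2 - y ≤ 6 * N ^ 2 := by nlinarith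
    refine Or.inl ?_
    simp only [BN, AN, Set.mem_prod, Set.mem_Icc, Prod.fst_sub, Prod.snd_sub]
    exact ⟨⟨⟨hax, h2N⟩, hy1, hy2⟩, ⟨hA1, hA2⟩, hA3, hA4⟩
  calc ENNReal.ofReal (N ^ 3 / 4)
      = ENNReal.ofReal (N / 4) * ENNReal.ofReal (N ^ 2) := by
        rw [← ENNReal.ofReal_mul (by positivity)]; ring_nf
    _ ≤ ENNReal.ofReal (b - a) * ENNReal.ofReal (N ^ 2) := by
        exact mul_le_mul_left (ENNReal.ofReal_le_ofReal hab) _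
    _ = volume (Set.Icc a b ×ˢ Set.Icc (2 * N ^ 2) (3 * N ^ 2)) := by
        rw [Measure.volume_eq_prod, Measure.prod_prod, Real.volume_Icc, Real.volume_Icc]
        congr 1
        ring_nf
    _ ≤ _ := measure_mono hsub

end
end

section
/- Let ε ∈ {−1, 1}, s ∈ ℝ, and 0 < ϵ < 1/2. For N ≥ 1 let φ_N be defined through its Fourier transform by φ̂_N(ξ,η) = N^{−3/2−s} (χ_{A_N}(ξ,η) + χ_{B_N}(ξ,η)), set t_N = N^{−4−ϵ}, and let u₂^N(t) = ∫₀ᵗ W(t−t') Λ((W(t')φ_N)²) dt' be the second Picard iterate of the DMKP Duhamel map at φ_N. Then there exist c > 0 and N₀ ≥ 1 (depending on s, ϵ, ε) such that for all N ≥ N₀, ‖u₂^N(t_N)‖_{H^{s,0}} ≥ c N^{−s−1/2−ϵ}. -/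
open MeasureTheory Real Set

noncomputable section

/-- Fourier transform of the initial data `φ_N`:
`φ̂_N(ζ) = N^{−3/2−s} (χ_{A_N}(ζ) + χ_{B_N}(ζ))`. -/
def phiNhat (s N : ℝ) (ζ : ℝ × ℝ) : ℂ :=
  ((N ^ (-(3 / 2) - s) : ℝ) : ℂ) *
    ((AN N).indicator (fun _ => (1 : ℂ)) ζ + (BN N).indicator (fun _ => (1 : ℂ)) ζ)

/-- Spatial Fourier transform of the second Picard iterate
`B(φ)(t) = ∫₀ᵗ W(t−t') Λ((W(t')φ)²) dt'` of the DMKP Duhamel map, expressed in terms of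
`g = φ̂`: the multiplier of `Λ = (1/2)∂ₓ + ∂ₓ²` is `iξ/2 + (iξ)²`, and the Fourier
transform of the product is `(2π)⁻²` times the convolution. -/
def u2hat (ε : ℝ) (g : ℝ × ℝ → ℂ) (t : ℝ) (ζ : ℝ × ℝ) : ℂ :=
  ∫ t' in (0:ℝ)..t,
    Complex.exp (Complex.I * (((t - t') * Psymb ε ζ.1 ζ.2 : ℝ) : ℂ) -
        ((|t - t'| * rho ζ.1 : ℝ) : ℂ)) *
      (Complex.I * (ζ.1 : ℂ) / 2 + (Complex.I * (ζ.1 : ℂ)) ^ 2) *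
      ((((2 * Real.pi) ^ 2 : ℝ) : ℂ)⁻¹ *
        ∫ ζ₁ : ℝ × ℝ,
          (Complex.exp (Complex.I * ((t' * Psymb ε ζ₁.1 ζ₁.2 : ℝ) : ℂ) -
              ((|t'| * rho ζ₁.1 : ℝ) : ℂ)) * g ζ₁) *
          (Complex.exp (Complex.I * ((t' * Psymb ε (ζ.1 - ζ₁.1) (ζ.2 - ζ₁.2) : ℝ) : ℂ) -
              ((|t'| * rho (ζ.1 - ζ₁.1) : ℝ) : ℂ)) * g (ζ - ζ₁)))


namespace S17

/-- real version of phiNhat -/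
def rphi (s N : ℝ) (ζ : ℝ × ℝ) : ℝ :=
  N ^ (-(3/2) - s) * ((AN N).indicator (fun _ => (1:ℝ)) ζ + (BN N).indicator (fun _ => (1:ℝ)) ζ)

lemma phiNhat_eq (s N : ℝ) (ζ : ℝ × ℝ) : phiNhat s N ζ = ((rphi s N ζ : ℝ) : ℂ) := by
  unfold phiNhat rphi
  by_cases hA : ζ ∈ AN N <;> by_cases hB : ζ ∈ BN N <;>
    simp [Set.indicator_of_mem, Set.indicator_of_notMem, hA, hB]

lemma rphi_nonneg (s N : ℝ) (hN : 0 < N) (ζ : ℝ × ℝ) : 0 ≤ rphi s N ζ := by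
  unfold rphi
  have h1 : (0:ℝ) ≤ N ^ (-(3/2) - s) := (Real.rpow_pos_of_pos hN _).le
  refine mul_nonneg h1 (add_nonneg ?_ ?_) <;>
    exact Set.indicator_nonneg (fun _ _ => zero_le_one) _

lemma rphi_le (s N : ℝ) (hN : 0 < N) (ζ : ℝ × ℝ) :
    rphi s N ζ ≤ 2 * N ^ (-(3/2) - s) := by
  unfold rphi
  have h1 : (0:ℝ) ≤ N ^ (-(3/2) - s) := (Real.rpow_pos_of_pos hN _).le
  have h2 : (AN N).indicator (fun _ => (1:ℝ)) ζ ≤ 1 := by by_cases h : ζ ∈ AN N <;> simp [h]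
  have h3 : (BN N).indicator (fun _ => (1:ℝ)) ζ ≤ 1 := by by_cases h : ζ ∈ BN N <;> simp [h]
  nlinarith [Set.indicator_nonneg (s := AN N) (f := fun _ => (1:ℝ)) (fun _ _ => zero_le_one) ζ,
    Set.indicator_nonneg (s := BN N) (f := fun _ => (1:ℝ)) (fun _ _ => zero_le_one) ζ]

lemma rphi_mem (s N : ℝ) (ζ : ℝ × ℝ) (h : rphi s N ζ ≠ 0) : ζ ∈ AN N ∪ BN N := by
  by_contra hc
  simp only [Set.mem_union, not_or] at hc
  unfold rphi at h
  rw [Set.indicator_of_notMem hc.1, Set.indicator_of_notMem hc.2] at h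
  simp at h

lemma rphi_of_mem_A (s N : ℝ) (ζ : ℝ × ℝ) (hA : ζ ∈ AN N) (hB : ζ ∉ BN N) :
    rphi s N ζ = N ^ (-(3/2) - s) := by
  unfold rphi
  rw [Set.indicator_of_mem hA, Set.indicator_of_notMem hB]; ring

lemma rphi_of_mem_B (s N : ℝ) (hN : 0 < N) (ζ : ℝ × ℝ) (hB : ζ ∈ BN N) :
    N ^ (-(3/2) - s) ≤ rphi s N ζ := by
  unfold rphi
  rw [Set.indicator_of_mem hB]
  have h1 : (0:ℝ) < N ^ (-(3/2) - s) := Real.rpow_pos_of_pos hN _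
  have : (0:ℝ) ≤ (AN N).indicator (fun _ => (1:ℝ)) ζ := Set.indicator_nonneg (fun _ _ => zero_le_one) ζ
  nlinarith

end S17

namespace S17

def e1 (ε t' : ℝ) (ζ₁ : ℝ × ℝ) : ℂ :=
  Complex.exp (Complex.I * ((t' * Psymb ε ζ₁.1 ζ₁.2 : ℝ) : ℂ) - ((|t'| * rho ζ₁.1 : ℝ) : ℂ))

def eo (ε t t' : ℝ) (ζ : ℝ × ℝ) : ℂ :=
  Complex.exp (Complex.I * (((t - t') * Psymb ε ζ.1 ζ.2 : ℝ) : ℂ) - ((|t - t'| * rho ζ.1 : ℝ) : ℂ))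

def msym (ξ : ℝ) : ℂ := Complex.I * (ξ : ℂ) / 2 + (Complex.I * (ξ : ℂ)) ^ 2

def Hf (ε s N t' : ℝ) (ζ ζ₁ : ℝ × ℝ) : ℂ :=
  (e1 ε t' ζ₁ * phiNhat s N ζ₁) * (e1 ε t' (ζ - ζ₁) * phiNhat s N (ζ - ζ₁))

def Kf (ε s N t t' : ℝ) (ζ : ℝ × ℝ) : ℂ :=
  eo ε t t' ζ * msym ζ.1 * ((((2 * Real.pi) ^ 2 : ℝ) : ℂ)⁻¹ * ∫ ζ₁ : ℝ × ℝ, Hf ε s N t' ζ ζ₁)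

lemma u2hat_eq (ε s N t : ℝ) (ζ : ℝ × ℝ) :
    u2hat ε (phiNhat s N) t ζ = ∫ t' in (0:ℝ)..t, Kf ε s N t t' ζ := rfl

-- norm of exp(I a - b) = exp(-b)
lemma norm_exp_aux (a b : ℝ) :
    ‖Complex.exp (Complex.I * (a : ℂ) - (b : ℂ))‖ = Real.exp (-b) := by
  rw [Complex.norm_exp]
  congr 1
  simp [Complex.sub_re, Complex.mul_re]

lemma norm_e1_le (ε t' : ℝ) (ζ₁ : ℝ × ℝ) (h : 0 ≤ rho ζ₁.1) : ‖e1 ε t' ζ₁‖ ≤ 1 := by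
  rw [e1, norm_exp_aux]
  apply Real.exp_le_one_iff.mpr
  simp only [neg_nonpos]
  positivity

lemma norm_eo_le (ε t t' : ℝ) (ζ : ℝ × ℝ) (h : 0 ≤ rho ζ.1) : ‖eo ε t t' ζ‖ ≤ 1 := by
  rw [eo, norm_exp_aux]
  apply Real.exp_le_one_iff.mpr
  simp only [neg_nonpos]
  positivity

lemma measurable_phiNhat (s N : ℝ) : Measurable (phiNhat s N) := by
  unfold phiNhat
  apply Measurable.const_mul
  apply Measurable.add <;>
  · apply Measurable.indicator measurable_const
    first
    | exact (measurableSet_Icc.prod measurableSet_Icc)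

lemma measurable_rphi (s N : ℝ) : Measurable (rphi s N) := by
  unfold rphi
  apply Measurable.const_mul
  apply Measurable.add <;>
  · apply Measurable.indicator measurable_const
    exact (measurableSet_Icc.prod measurableSet_Icc)

lemma measurable_Psymb (ε : ℝ) : Measurable (fun ζ : ℝ × ℝ => Psymb ε ζ.1 ζ.2) := by
  unfold Psymb
  fun_prop

lemma measurable_rho : Measurable (fun ζ : ℝ × ℝ => rho ζ.1) := by
  unfold rho; fun_prop

end S17

namespace S17

set_option maxHeartbeats 1000000

lemma measurable_e1_joint :
    ∀ ε : ℝ, Measurable (fun q : ℝ × (ℝ × ℝ) => e1 ε q.1 q.2) := by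
  intro ε
  unfold e1
  apply Complex.measurable_exp.comp
  apply Measurable.sub
  · apply (Complex.measurable_ofReal.comp ?_).const_mul
    exact (measurable_fst.mul ((measurable_Psymb ε).comp measurable_snd))
  · apply Complex.measurable_ofReal.comp
    exact (measurable_fst.abs.mul (measurable_rho.comp measurable_snd))

lemma measurable_Hf_joint (ε s N : ℝ) :
    Measurable (fun q : (ℝ × (ℝ × ℝ)) × (ℝ × ℝ) => Hf ε s N q.1.1 q.1.2 q.2) := by
  unfold Hf
  have h1 : Measurable (fun q : (ℝ × (ℝ × ℝ)) × (ℝ × ℝ) => (q.1.1, q.2)) :=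
    (measurable_fst.fst).prodMk measurable_snd
  have h2 : Measurable (fun q : (ℝ × (ℝ × ℝ)) × (ℝ × ℝ) => (q.1.1, q.1.2 - q.2)) :=
    (measurable_fst.fst).prodMk (measurable_fst.snd.sub measurable_snd)
  exact (((measurable_e1_joint ε).comp h1).mul
      ((measurable_phiNhat s N).comp measurable_snd)).mul
    (((measurable_e1_joint ε).comp h2).mul
      ((measurable_phiNhat s N).comp (measurable_fst.snd.sub measurable_snd)))

lemma measurable_Hf (ε s N t' : ℝ) (ζ : ℝ × ℝ) :
    Measurable (fun ζ₁ : ℝ × ℝ => Hf ε s N t' ζ ζ₁) := by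
  unfold Hf
  apply Measurable.mul
  · apply Measurable.mul
    · unfold e1
      apply Complex.measurable_exp.comp
      apply Measurable.sub
      · exact (Complex.measurable_ofReal.comp ((measurable_Psymb ε).const_mul t')).const_mul _
      · exact Complex.measurable_ofReal.comp (measurable_rho.const_mul _)
    · exact measurable_phiNhat s N
  · apply Measurable.mul
    · unfold e1
      apply Complex.measurable_exp.comp
      have hsub : Measurable (fun ζ₁ : ℝ × ℝ => ζ - ζ₁) := measurable_const.sub measurable_id
      apply Measurable.sub
      · exact (Complex.measurable_ofReal.comp
          (((measurable_Psymb ε).comp hsub).const_mul t')).const_mul _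
      · exact Complex.measurable_ofReal.comp ((measurable_rho.comp hsub).const_mul _)
    · exact (measurable_phiNhat s N).comp (measurable_const.sub measurable_id)

lemma measurable_Kf_joint (ε s N t : ℝ) :
    Measurable (fun q : ℝ × (ℝ × ℝ) => Kf ε s N t q.1 q.2) := by
  unfold Kf
  have hinn : StronglyMeasurable (fun q : ℝ × (ℝ × ℝ) => ∫ ζ₁ : ℝ × ℝ, Hf ε s N q.1 q.2 ζ₁) :=
    (measurable_Hf_joint ε s N).stronglyMeasurable.integral_prod_right'
  have heo : Measurable (fun q : ℝ × (ℝ × ℝ) => eo ε t q.1 q.2) := by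
    unfold eo
    apply Complex.measurable_exp.comp
    apply Measurable.sub
    · apply (Complex.measurable_ofReal.comp ?_).const_mul
      exact ((measurable_const.sub measurable_fst).mul ((measurable_Psymb ε).comp measurable_snd))
    · apply Complex.measurable_ofReal.comp
      exact ((measurable_const.sub measurable_fst).abs.mul (measurable_rho.comp measurable_snd))
  have hm : Measurable (fun q : ℝ × (ℝ × ℝ) => msym q.2.1) := by
    unfold msym; fun_prop
  exact ((heo.mul hm).mul (hinn.measurable.const_mul _))

lemma aemeasurable_u2hat (ε s N t : ℝ) (ht : 0 ≤ t) :
    AEStronglyMeasurable (fun ζ => u2hat ε (phiNhat s N) t ζ) volume := by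
  have : (fun ζ => u2hat ε (phiNhat s N) t ζ)
      = fun ζ => ∫ t' in Set.Ioc (0:ℝ) t, Kf ε s N t t' ζ := by
    funext ζ
    rw [u2hat_eq, intervalIntegral.integral_of_le ht]
  rw [this]
  exact ((measurable_Kf_joint ε s N t).stronglyMeasurable.integral_prod_left').aestronglyMeasurable

end S17

namespace S17

def TN (N : ℝ) : Set (ℝ × ℝ) := Icc N (4*N) ×ˢ Icc (-12*N^2) (12*N^2)
def SN (N : ℝ) : Set (ℝ × ℝ) := Icc (8*N/5) (19*N/10) ×ˢ Icc (11*N^2/5) (14*N^2/5)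
def SP (N : ℝ) (ζ : ℝ × ℝ) : Set (ℝ × ℝ) :=
  Icc (N/2) (ζ.1 - N) ×ˢ Icc (ζ.2 - 3*N^2) (ζ.2 - 2*N^2)

lemma mem_AB {s N : ℝ} {ζ₁ : ℝ × ℝ} (hN : 0 ≤ N) (h : ζ₁ ∈ AN N ∪ BN N) :
    N/2 ≤ ζ₁.1 ∧ ζ₁.1 ≤ 2*N ∧ |ζ₁.2| ≤ 6*N^2 := by
  rcases h with h | h <;>
  · obtain ⟨⟨h1, h2⟩, h3, h4⟩ := h
    rw [abs_le]
    refine ⟨by nlinarith, by nlinarith, by nlinarith, by nlinarith⟩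

lemma rho_nonneg {ξ : ℝ} (h : 1 ≤ ξ) : 0 ≤ rho ξ := by
  unfold rho
  have h1 : 1 ≤ ξ^2 := by nlinarith
  nlinarith [mul_nonneg (sq_nonneg ξ) (by linarith : (0:ℝ) ≤ ξ^2 - 1)]

lemma rho_le {ξ N : ℝ} (h0 : 0 ≤ ξ) (h : ξ ≤ 4*N) : rho ξ ≤ 256*N^4 := by
  unfold rho
  have h4 : ξ^4 ≤ (4*N)^4 := pow_le_pow_left₀ h0 h 4
  nlinarith [sq_nonneg ξ]

lemma Psymb_bound {ε ξ η N : ℝ} (hε : ε = 1 ∨ ε = -1) (hN : 0 < N)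
    (h1 : N/2 ≤ ξ) (h2 : ξ ≤ 4*N) (h3 : |η| ≤ 12*N^2) :
    |Psymb ε ξ η| ≤ 352*N^3 := by
  have hξ0 : 0 < ξ := lt_of_lt_of_le (by positivity) h1
  have hη2 : η^2 ≤ 144*N^4 := by nlinarith [abs_nonneg η, sq_abs η]
  have hd : η^2/ξ ≤ 288*N^3 := by
    rw [div_le_iff₀ hξ0]
    nlinarith
  have hd0 : 0 ≤ η^2/ξ := by positivity
  have hc : ξ^3 ≤ 64*N^3 := by
    have := pow_le_pow_left₀ hξ0.le h2 3
    nlinarith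
  have hc0 : 0 < ξ^3 := by positivity
  have hN3 : (0:ℝ) ≤ N^3 := by positivity
  unfold Psymb
  rcases hε with h | h <;> rw [h] <;> rw [abs_le] <;>
    constructor <;> simp only [one_mul, neg_mul, neg_div, sub_neg_eq_add] <;> linarith

lemma volume_prodIcc (a b c d : ℝ) (h1 : a ≤ b) (h2 : c ≤ d) :
    (volume (Icc a b ×ˢ Icc c d)).toReal = (b-a)*(d-c) := by
  rw [show (volume : Measure (ℝ × ℝ)) = (volume : Measure ℝ).prod volume from rfl]
  rw [Measure.prod_prod, Real.volume_Icc, Real.volume_Icc, ENNReal.toReal_mul,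
    ENNReal.toReal_ofReal (by linarith), ENNReal.toReal_ofReal (by linarith)]

lemma volume_prodIcc_lt_top (a b c d : ℝ) :
    volume (Icc a b ×ˢ Icc c d) < ⊤ :=
  (isCompact_Icc.prod isCompact_Icc).measure_lt_top

end S17

namespace S17

set_option maxHeartbeats 1000000

def bnd (s N : ℝ) (ζ₁ : ℝ × ℝ) : ℝ :=
  2 * (N ^ (-(3/2) - s))^2 *
    ((AN N).indicator (fun _ => (1:ℝ)) ζ₁ + (BN N).indicator (fun _ => (1:ℝ)) ζ₁)

lemma norm_Hf_le {ε s N : ℝ} (hN : 2 ≤ N) (t' : ℝ) (ζ ζ₁ : ℝ × ℝ) :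
    ‖Hf ε s N t' ζ ζ₁‖ ≤ bnd s N ζ₁ := by
  have hN0 : (0:ℝ) < N := by linarith
  have hb0 : 0 ≤ bnd s N ζ₁ := by
    unfold bnd
    have := Real.rpow_pos_of_pos hN0 (-(3/2) - s)
    have h1 : (0:ℝ) ≤ (AN N).indicator (fun _ => (1:ℝ)) ζ₁ :=
      Set.indicator_nonneg (fun _ _ => zero_le_one) _
    have h2 : (0:ℝ) ≤ (BN N).indicator (fun _ => (1:ℝ)) ζ₁ :=
      Set.indicator_nonneg (fun _ _ => zero_le_one) _
    positivity
  by_cases h1 : rphi s N ζ₁ = 0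
  · rw [Hf, phiNhat_eq, h1]
    simpa using hb0
  by_cases h2 : rphi s N (ζ - ζ₁) = 0
  · rw [Hf, phiNhat_eq s N (ζ - ζ₁), h2]
    simpa using hb0
  -- both nonzero
  have hm1 := mem_AB (s := s) hN0.le (rphi_mem s N ζ₁ h1)
  have hm2 := mem_AB (s := s) hN0.le (rphi_mem s N (ζ - ζ₁) h2)
  have he1 : ‖e1 ε t' ζ₁‖ ≤ 1 := norm_e1_le _ _ _ (rho_nonneg (by linarith [hm1.1]))
  have he2 : ‖e1 ε t' (ζ - ζ₁)‖ ≤ 1 := norm_e1_le _ _ _ (rho_nonneg (by linarith [hm2.1]))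
  have hp1 : ‖phiNhat s N ζ₁‖ ≤ rphi s N ζ₁ := by
    rw [phiNhat_eq, Complex.norm_real, Real.norm_eq_abs, abs_of_nonneg (rphi_nonneg s N hN0 _)]
  have hp2 : ‖phiNhat s N (ζ - ζ₁)‖ ≤ 2 * N ^ (-(3/2) - s) := by
    rw [phiNhat_eq, Complex.norm_real, Real.norm_eq_abs, abs_of_nonneg (rphi_nonneg s N hN0 _)]
    exact rphi_le s N hN0 _
  have hr1 : rphi s N ζ₁ ≤ N ^ (-(3/2) - s) *
      ((AN N).indicator (fun _ => (1:ℝ)) ζ₁ + (BN N).indicator (fun _ => (1:ℝ)) ζ₁) := le_of_eq rfl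
  calc ‖Hf ε s N t' ζ ζ₁‖
      = ‖e1 ε t' ζ₁‖ * ‖phiNhat s N ζ₁‖ * (‖e1 ε t' (ζ - ζ₁)‖ * ‖phiNhat s N (ζ - ζ₁)‖) := by
        rw [Hf]; simp [norm_mul]
    _ ≤ 1 * (rphi s N ζ₁) * (1 * (2 * N ^ (-(3/2) - s))) := by
        apply mul_le_mul
        · exact mul_le_mul he1 hp1 (norm_nonneg _) zero_le_one
        · exact mul_le_mul he2 hp2 (norm_nonneg _) zero_le_one
        · positivity
        · have := rphi_nonneg s N hN0 ζ₁; positivity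
    _ = bnd s N ζ₁ := by unfold rphi bnd; ring

lemma integrable_ind (S : Set (ℝ × ℝ)) (hS : MeasurableSet S) (hK : IsCompact S) (c : ℝ) :
    Integrable (S.indicator (fun _ => c)) volume := by
  rw [integrable_indicator_iff hS]
  exact integrableOn_const hK.measure_lt_top.ne

lemma measurableSet_AN (N : ℝ) : MeasurableSet (AN N) := measurableSet_Icc.prod measurableSet_Icc
lemma measurableSet_BN (N : ℝ) : MeasurableSet (BN N) := measurableSet_Icc.prod measurableSet_Icc

lemma integrable_bnd (s N : ℝ) : Integrable (bnd s N) volume := by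
  unfold bnd
  exact (((integrable_ind _ (measurableSet_AN N) (isCompact_Icc.prod isCompact_Icc) 1).add
    (integrable_ind _ (measurableSet_BN N) (isCompact_Icc.prod isCompact_Icc) 1)).const_mul _)

lemma integral_bnd (s N : ℝ) (hN : 0 ≤ N) :
    ∫ ζ₁, bnd s N ζ₁ = 2 * (N ^ (-(3/2) - s))^2 * (7 * N^3) := by
  unfold bnd
  rw [integral_const_mul, integral_add
      ((integrable_ind _ (measurableSet_AN N) (isCompact_Icc.prod isCompact_Icc) 1))
      ((integrable_ind _ (measurableSet_BN N) (isCompact_Icc.prod isCompact_Icc) 1))]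
  rw [integral_indicator_const _ (measurableSet_AN N), integral_indicator_const _ (measurableSet_BN N),
    measureReal_def, measureReal_def]
  rw [AN, BN, volume_prodIcc _ _ _ _ (by linarith) (by nlinarith),
    volume_prodIcc _ _ _ _ (by linarith) (by nlinarith)]
  simp only [smul_eq_mul, mul_one]
  ring

lemma integrable_Hf {ε s N : ℝ} (hN : 2 ≤ N) (t' : ℝ) (ζ : ℝ × ℝ) :
    Integrable (fun ζ₁ => Hf ε s N t' ζ ζ₁) volume :=
  (integrable_bnd s N).mono' (measurable_Hf ε s N t' ζ).aestronglyMeasurable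
    (Filter.Eventually.of_forall (norm_Hf_le hN t' ζ))

lemma norm_inner_le {ε s N : ℝ} (hN : 2 ≤ N) (t' : ℝ) (ζ : ℝ × ℝ) :
    ‖∫ ζ₁ : ℝ × ℝ, Hf ε s N t' ζ ζ₁‖ ≤ 2 * (N ^ (-(3/2) - s))^2 * (7 * N^3) := by
  rw [← integral_bnd s N (by linarith)]
  exact norm_integral_le_of_norm_le (integrable_bnd s N)
    (Filter.Eventually.of_forall (norm_Hf_le hN t' ζ))

end S17

namespace S17

set_option maxHeartbeats 1000000

lemma mem_TN_of {s N : ℝ} {ζ ζ₁ : ℝ × ℝ} (hN : 0 ≤ N)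
    (h1 : rphi s N ζ₁ ≠ 0) (h2 : rphi s N (ζ - ζ₁) ≠ 0) : ζ ∈ TN N := by
  have hm1 := mem_AB (s := s) hN (rphi_mem s N ζ₁ h1)
  have hm2 := mem_AB (s := s) hN (rphi_mem s N (ζ - ζ₁) h2)
  have e1 : (ζ - ζ₁).1 = ζ.1 - ζ₁.1 := rfl
  have e2 : (ζ - ζ₁).2 = ζ.2 - ζ₁.2 := rfl
  rw [e1] at hm2
  rw [e2] at hm2
  obtain ⟨a1, a2, a3⟩ := hm1
  obtain ⟨b1, b2, b3⟩ := hm2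
  rw [abs_le] at a3 b3
  exact ⟨⟨by linarith, by linarith⟩, ⟨by linarith [a3.1, b3.1], by linarith [a3.2, b3.2]⟩⟩

lemma u2hat_zero {ε s N t : ℝ} (hN : 0 < N) {ζ : ℝ × ℝ} (hζ : ζ ∉ TN N) :
    u2hat ε (phiNhat s N) t ζ = 0 := by
  have hH : ∀ t' ζ₁, Hf ε s N t' ζ ζ₁ = 0 := by
    intro t' ζ₁
    by_cases h1 : rphi s N ζ₁ = 0
    · rw [Hf, phiNhat_eq, h1]; simp
    by_cases h2 : rphi s N (ζ - ζ₁) = 0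
    · rw [Hf, phiNhat_eq s N (ζ - ζ₁), h2]; simp
    exact absurd (mem_TN_of hN.le h1 h2) hζ
  have hK : ∀ t', Kf ε s N t t' ζ = 0 := by
    intro t'
    rw [Kf]
    have : (fun ζ₁ : ℝ × ℝ => Hf ε s N t' ζ ζ₁) = fun _ => (0:ℂ) := funext (hH t')
    rw [this, integral_zero]
    ring
  rw [u2hat_eq]
  have : (fun t' => Kf ε s N t t' ζ) = fun _ => (0:ℂ) := funext hK
  rw [intervalIntegral.integral_congr (g := fun _ => (0:ℂ)) (fun x _ => hK x)]
  simp

lemma norm_msym_le {ξ N : ℝ} (hN : 1 ≤ N) (h0 : 0 ≤ ξ) (h : ξ ≤ 4*N) :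
    ‖msym ξ‖ ≤ 18*N^2 := by
  unfold msym
  calc ‖Complex.I * (ξ:ℂ) / 2 + (Complex.I * (ξ:ℂ))^2‖
      ≤ ‖Complex.I * (ξ:ℂ) / 2‖ + ‖(Complex.I * (ξ:ℂ))^2‖ := norm_add_le _ _
    _ = |ξ|/2 + |ξ|^2 := by
        simp [norm_mul, norm_pow, Complex.norm_real, Complex.norm_I, Real.norm_eq_abs]
    _ ≤ (4*N)/2 + (4*N)^2 := by
        rw [abs_of_nonneg h0]
        have : ξ^2 ≤ (4*N)^2 := by nlinarith
        gcongr <;> linarith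
    _ ≤ 18*N^2 := by nlinarith

lemma norm_c2pi_le : ‖(((2 * Real.pi) ^ 2 : ℝ) : ℂ)⁻¹‖ ≤ 1 := by
  rw [norm_inv, Complex.norm_real, Real.norm_eq_abs]
  have h : (1:ℝ) ≤ (2*Real.pi)^2 := by nlinarith [Real.pi_gt_three]
  rw [abs_of_nonneg (by positivity)]
  rw [inv_le_one_iff₀]
  right; exact h

lemma norm_Kf_le {ε s N t : ℝ} (hN : 2 ≤ N) (t' : ℝ) {ζ : ℝ × ℝ} (hζ : ζ ∈ TN N) :
    ‖Kf ε s N t t' ζ‖ ≤ 18*N^2 * (2 * (N ^ (-(3/2) - s))^2 * (7 * N^3)) := by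
  obtain ⟨⟨hz1, hz2⟩, _⟩ := hζ
  have hN0 : (0:ℝ) < N := by linarith
  have heo : ‖eo ε t t' ζ‖ ≤ 1 := norm_eo_le _ _ _ _ (rho_nonneg (by linarith))
  have hm : ‖msym ζ.1‖ ≤ 18*N^2 := norm_msym_le (by linarith) (by linarith) hz2
  have hin := norm_inner_le (ε := ε) (s := s) hN t' ζ
  have hc := norm_c2pi_le
  have hb : (0:ℝ) ≤ 2 * (N ^ (-(3/2) - s))^2 * (7 * N^3) := by positivity
  calc ‖Kf ε s N t t' ζ‖
      = ‖eo ε t t' ζ‖ * ‖msym ζ.1‖ * (‖(((2 * Real.pi) ^ 2 : ℝ) : ℂ)⁻¹‖ * ‖∫ ζ₁ : ℝ × ℝ, Hf ε s N t' ζ ζ₁‖) := by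
        rw [Kf]; simp [norm_mul]
    _ ≤ 1 * (18*N^2) * (1 * (2 * (N ^ (-(3/2) - s))^2 * (7 * N^3))) := by
        apply mul_le_mul
        · exact mul_le_mul heo hm (norm_nonneg _) zero_le_one
        · exact mul_le_mul hc hin (norm_nonneg _) zero_le_one
        · positivity
        · positivity
    _ = 18*N^2 * (2 * (N ^ (-(3/2) - s))^2 * (7 * N^3)) := by ring

lemma norm_u2hat_le {ε s N t : ℝ} (hN : 2 ≤ N) (ht : 0 ≤ t) {ζ : ℝ × ℝ} (hζ : ζ ∈ TN N) :
    ‖u2hat ε (phiNhat s N) t ζ‖ ≤ 18*N^2 * (2 * (N ^ (-(3/2) - s))^2 * (7 * N^3)) * t := by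
  rw [u2hat_eq]
  have := intervalIntegral.norm_integral_le_of_norm_le_const
    (C := 18*N^2 * (2 * (N ^ (-(3/2) - s))^2 * (7 * N^3)))
    (f := fun t' => Kf ε s N t t' ζ) (a := 0) (b := t)
    (fun x _ => norm_Kf_le hN x hζ)
  calc ‖∫ t' in (0:ℝ)..t, Kf ε s N t t' ζ‖
      ≤ 18*N^2 * (2 * (N ^ (-(3/2) - s))^2 * (7 * N^3)) * |t - 0| := this
    _ = 18*N^2 * (2 * (N ^ (-(3/2) - s))^2 * (7 * N^3)) * t := by
        rw [sub_zero, abs_of_nonneg ht]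

end S17

namespace S17

set_option maxHeartbeats 1000000

lemma re_prod (ξ Φ r : ℝ) :
    ((((ξ^2 : ℝ) : ℂ) - Complex.I * ((ξ/2 : ℝ) : ℂ)) *
      Complex.exp (Complex.I * (Φ : ℂ) - (r : ℂ))).re
    = Real.exp (-r) * (ξ^2 * Real.cos Φ + ξ/2 * Real.sin Φ) := by
  have h1 : (Complex.I * (Φ : ℂ) - (r : ℂ)).re = -r := by simp
  have h2 : (Complex.I * (Φ : ℂ) - (r : ℂ)).im = Φ := by simp
  rw [Complex.mul_re, Complex.exp_re, Complex.exp_im, h1, h2]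
  simp [Complex.sub_re, Complex.sub_im, Complex.mul_re, Complex.mul_im, ← Complex.ofReal_pow]
  ring

lemma re_nonneg_key {ξ Φ : ℝ} (r : ℝ) (hξ : 1 ≤ ξ) (hΦ : |Φ| ≤ 1/50) :
    0 ≤ ((((ξ^2 : ℝ) : ℂ) - Complex.I * ((ξ/2 : ℝ) : ℂ)) *
      Complex.exp (Complex.I * (Φ : ℂ) - (r : ℂ))).re := by
  rw [re_prod]
  have hc : 1 - Φ^2/2 ≤ Real.cos Φ := Real.one_sub_sq_div_two_le_cos
  have hs : |Real.sin Φ| ≤ |Φ| := Real.abs_sin_le_abs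
  have hΦ2 : Φ^2 ≤ (1/50)^2 := by nlinarith [abs_nonneg Φ, sq_abs Φ]
  have hsin : ξ/2 * Real.sin Φ ≥ -(ξ/2 * (1/50)) := by
    have h1 : Real.sin Φ ≥ -(1/50) := by
      have := neg_abs_le (Real.sin Φ); linarith
    nlinarith
  have hcos : ξ^2 * Real.cos Φ ≥ ξ^2 * (1 - (1/50)^2/2) := by nlinarith
  have hbr : 0 ≤ ξ^2 * Real.cos Φ + ξ/2 * Real.sin Φ := by nlinarith
  positivity

lemma re_ge_key {ξ Φ r : ℝ} (hξ : 1 ≤ ξ) (hΦ : |Φ| ≤ 1/50) (hr0 : 0 ≤ r) (hr : r ≤ 1/10) :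
    ξ^2/2 ≤ ((((ξ^2 : ℝ) : ℂ) - Complex.I * ((ξ/2 : ℝ) : ℂ)) *
      Complex.exp (Complex.I * (Φ : ℂ) - (r : ℂ))).re := by
  rw [re_prod]
  have hc : 1 - Φ^2/2 ≤ Real.cos Φ := Real.one_sub_sq_div_two_le_cos
  have hs : |Real.sin Φ| ≤ |Φ| := Real.abs_sin_le_abs
  have hΦ2 : Φ^2 ≤ (1/50)^2 := by nlinarith [abs_nonneg Φ, sq_abs Φ]
  have h1 : Real.sin Φ ≥ -(1/50) := by
    have h2 := neg_abs_le (Real.sin Φ); linarith [hs.trans hΦ]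
  have hexp : Real.exp (-r) ≥ 1 - r := by
    have := Real.add_one_le_exp (-r); linarith
  have hexp9 : Real.exp (-r) ≥ 9/10 := by linarith
  have hbr : ξ^2 * Real.cos Φ + ξ/2 * Real.sin Φ ≥ (39/40) * ξ^2 := by nlinarith
  have hb0 : (0:ℝ) ≤ (39/40) * ξ^2 := by positivity
  calc ξ^2/2 ≤ (9/10) * ((39/40) * ξ^2) := by nlinarith
    _ ≤ Real.exp (-r) * (ξ^2 * Real.cos Φ + ξ/2 * Real.sin Φ) := by
        apply mul_le_mul hexp9 hbr hb0 (le_trans (by norm_num) hexp9)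

lemma msym_eq (ξ : ℝ) : msym ξ = -(((ξ^2 : ℝ) : ℂ) - Complex.I * ((ξ/2 : ℝ) : ℂ)) := by
  unfold msym
  rw [mul_pow, Complex.I_sq]
  push_cast
  ring

end S17

namespace S17

set_option maxHeartbeats 2000000

def Phi (ε t t' : ℝ) (ζ ζ₁ : ℝ × ℝ) : ℝ :=
  (t - t') * Psymb ε ζ.1 ζ.2 + t' * Psymb ε ζ₁.1 ζ₁.2 + t' * Psymb ε (ζ.1 - ζ₁.1) (ζ.2 - ζ₁.2)

def rr (t t' : ℝ) (ζ ζ₁ : ℝ × ℝ) : ℝ :=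
  (t - t') * rho ζ.1 + t' * rho ζ₁.1 + t' * rho (ζ.1 - ζ₁.1)

def Gf (ε s N t t' : ℝ) (ζ ζ₁ : ℝ × ℝ) : ℂ :=
  eo ε t t' ζ * msym ζ.1 * (((2 * Real.pi) ^ 2 : ℝ) : ℂ)⁻¹ * Hf ε s N t' ζ ζ₁

lemma Kf_eq_int (ε s N t t' : ℝ) (ζ : ℝ × ℝ) :
    Kf ε s N t t' ζ = ∫ ζ₁ : ℝ × ℝ, Gf ε s N t t' ζ ζ₁ := by
  rw [Kf]
  rw [show eo ε t t' ζ * msym ζ.1 * ((((2 * Real.pi) ^ 2 : ℝ) : ℂ)⁻¹ * ∫ ζ₁ : ℝ × ℝ, Hf ε s N t' ζ ζ₁)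
      = (eo ε t t' ζ * msym ζ.1 * (((2 * Real.pi) ^ 2 : ℝ) : ℂ)⁻¹) * ∫ ζ₁ : ℝ × ℝ, Hf ε s N t' ζ ζ₁ from by ring]
  rw [← integral_const_mul]
  rfl

lemma Gf_repr (ε s N t t' : ℝ) (ζ ζ₁ : ℝ × ℝ) (ht'0 : 0 ≤ t') (ht' : t' ≤ t) :
    Gf ε s N t t' ζ ζ₁ =
      -((((((2*Real.pi)^2)⁻¹ * (rphi s N ζ₁ * rphi s N (ζ - ζ₁)) : ℝ)) : ℂ) *
        ((((ζ.1^2 : ℝ) : ℂ) - Complex.I * ((ζ.1/2 : ℝ) : ℂ)) *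
        Complex.exp (Complex.I * ((Phi ε t t' ζ ζ₁ : ℝ) : ℂ) - ((rr t t' ζ ζ₁ : ℝ) : ℂ)))) := by
  have habs1 : |t - t'| = t - t' := abs_of_nonneg (by linarith)
  have habs2 : |t'| = t' := abs_of_nonneg ht'0
  have hc1 : (ζ - ζ₁).1 = ζ.1 - ζ₁.1 := rfl
  have hc2 : (ζ - ζ₁).2 = ζ.2 - ζ₁.2 := rfl
  rw [Gf, Hf, msym_eq, phiNhat_eq, phiNhat_eq, eo, e1, e1, habs1, habs2, hc1, hc2]
  rw [show Complex.I * ((Phi ε t t' ζ ζ₁ : ℝ) : ℂ) - ((rr t t' ζ ζ₁ : ℝ) : ℂ)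
      = (Complex.I * (((t - t') * Psymb ε ζ.1 ζ.2 : ℝ) : ℂ) - (((t - t') * rho ζ.1 : ℝ) : ℂ))
      + (Complex.I * ((t' * Psymb ε ζ₁.1 ζ₁.2 : ℝ) : ℂ) - ((t' * rho ζ₁.1 : ℝ) : ℂ))
      + (Complex.I * ((t' * Psymb ε (ζ.1 - ζ₁.1) (ζ.2 - ζ₁.2) : ℝ) : ℂ) - ((t' * rho (ζ.1 - ζ₁.1) : ℝ) : ℂ))
      from by rw [Phi, rr]; push_cast; ring]
  rw [Complex.exp_add, Complex.exp_add]
  push_cast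
  ring

lemma SN_subset_TN {N : ℝ} (hN : 0 ≤ N) : SN N ⊆ TN N := by
  rintro ζ ⟨⟨h1, h2⟩, h3, h4⟩
  have hN2 : (0:ℝ) ≤ N^2 := sq_nonneg N
  exact ⟨⟨by linarith, by linarith⟩, ⟨by nlinarith, by nlinarith⟩⟩

lemma Phi_abs_le {ε N t t' : ℝ} {ζ ζ₁ : ℝ × ℝ} (hε : ε = 1 ∨ ε = -1) (hN : 10 ≤ N)
    (ht'0 : 0 ≤ t') (ht' : t' ≤ t) (hsm : t * N^4 ≤ 1/10000)
    (hζ : ζ ∈ TN N) (h1 : ζ₁ ∈ AN N ∪ BN N) (h2 : ζ - ζ₁ ∈ AN N ∪ BN N) :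
    |Phi ε t t' ζ ζ₁| ≤ 1/50 := by
  have hN0 : (0:ℝ) < N := by linarith
  have ht0 : 0 ≤ t := le_trans ht'0 ht'
  obtain ⟨⟨hz1, hz2⟩, hz3, hz4⟩ := hζ
  have hPz : |Psymb ε ζ.1 ζ.2| ≤ 352*N^3 :=
    Psymb_bound hε hN0 (by linarith) hz2 (abs_le.mpr ⟨by linarith, hz4⟩)
  obtain ⟨ha1, ha2, ha3⟩ := mem_AB (s := 0) hN0.le h1
  have hP1 : |Psymb ε ζ₁.1 ζ₁.2| ≤ 352*N^3 := by
    refine Psymb_bound hε hN0 ha1 (by linarith) ?_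
    have h12 : (6:ℝ)*N^2 ≤ 12*N^2 := by nlinarith
    exact ha3.trans h12
  obtain ⟨hb1, hb2, hb3⟩ := mem_AB (s := 0) hN0.le h2
  have hc1 : (ζ - ζ₁).1 = ζ.1 - ζ₁.1 := rfl
  have hc2 : (ζ - ζ₁).2 = ζ.2 - ζ₁.2 := rfl
  rw [hc1] at hb1 hb2
  rw [hc2] at hb3
  have hP2 : |Psymb ε (ζ.1 - ζ₁.1) (ζ.2 - ζ₁.2)| ≤ 352*N^3 := by
    refine Psymb_bound hε hN0 hb1 (by linarith) ?_
    have h12 : (6:ℝ)*N^2 ≤ 12*N^2 := by nlinarith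
    exact hb3.trans h12
  have hN3 : (0:ℝ) < N^3 := by positivity
  have key : t * N^3 ≤ 1/100000 := by nlinarith
  calc |Phi ε t t' ζ ζ₁|
      ≤ |(t - t') * Psymb ε ζ.1 ζ.2| + |t' * Psymb ε ζ₁.1 ζ₁.2|
        + |t' * Psymb ε (ζ.1 - ζ₁.1) (ζ.2 - ζ₁.2)| := by
        rw [Phi]
        exact (abs_add_le _ _).trans (by gcongr; exact abs_add_le _ _)
    _ ≤ (t - t') * (352*N^3) + t' * (352*N^3) + t' * (352*N^3) := by
        rw [abs_mul, abs_mul, abs_mul, abs_of_nonneg (by linarith : (0:ℝ) ≤ t - t'),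
          abs_of_nonneg ht'0]
        gcongr <;> linarith
    _ ≤ 3 * t * (352*N^3) := by nlinarith
    _ = 1056 * (t * N^3) := by ring
    _ ≤ 1056 * (1/100000) := by linarith
    _ ≤ 1/50 := by norm_num

lemma rr_bounds {N t t' : ℝ} {ζ ζ₁ : ℝ × ℝ} (hN : 10 ≤ N)
    (ht'0 : 0 ≤ t') (ht' : t' ≤ t) (hsm : t * N^4 ≤ 1/10000)
    (hζ : ζ ∈ TN N) (h1 : ζ₁ ∈ AN N ∪ BN N) (h2 : ζ - ζ₁ ∈ AN N ∪ BN N) :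
    0 ≤ rr t t' ζ ζ₁ ∧ rr t t' ζ ζ₁ ≤ 1/10 := by
  have hN0 : (0:ℝ) < N := by linarith
  have ht0 : 0 ≤ t := le_trans ht'0 ht'
  obtain ⟨⟨hz1, hz2⟩, hz3, hz4⟩ := hζ
  obtain ⟨ha1, ha2, ha3⟩ := mem_AB (s := 0) hN0.le h1
  obtain ⟨hb1, hb2, hb3⟩ := mem_AB (s := 0) hN0.le h2
  have hc1 : (ζ - ζ₁).1 = ζ.1 - ζ₁.1 := rfl
  rw [hc1] at hb1 hb2
  have hr1 : 0 ≤ rho ζ.1 := rho_nonneg (by linarith)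
  have hr2 : 0 ≤ rho ζ₁.1 := rho_nonneg (by linarith)
  have hr3 : 0 ≤ rho (ζ.1 - ζ₁.1) := rho_nonneg (by linarith)
  have hl1 : rho ζ.1 ≤ 256*N^4 := rho_le (by linarith) hz2
  have hl2 : rho ζ₁.1 ≤ 256*N^4 := rho_le (by linarith) (by linarith)
  have hl3 : rho (ζ.1 - ζ₁.1) ≤ 256*N^4 := rho_le (by linarith) (by linarith)
  constructor
  · rw [rr]
    have := mul_nonneg (by linarith : (0:ℝ) ≤ t - t') hr1
    have := mul_nonneg ht'0 hr2
    have := mul_nonneg ht'0 hr3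
    linarith
  · rw [rr]
    have e1 : (t - t') * rho ζ.1 ≤ t * (256*N^4) := by
      apply mul_le_mul (by linarith) hl1 hr1 ht0
    have e2 : t' * rho ζ₁.1 ≤ t * (256*N^4) := mul_le_mul ht' hl2 hr2 ht0
    have e3 : t' * rho (ζ.1 - ζ₁.1) ≤ t * (256*N^4) := mul_le_mul ht' hl3 hr3 ht0
    have : t * (256*N^4) ≤ 256/10000 := by nlinarith
    linarith

lemma c2pi_ge : (1:ℝ)/40 ≤ (((2*Real.pi)^2)⁻¹ : ℝ) := by
  have h : ((2*Real.pi)^2 : ℝ) ≤ 40 := by nlinarith [Real.pi_lt_d2, Real.pi_gt_three]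
  have h0 : (0:ℝ) < (2*Real.pi)^2 := by positivity
  rw [show (1:ℝ)/40 = (40:ℝ)⁻¹ by norm_num]
  exact inv_anti₀ h0 h

end S17

namespace S17

set_option maxHeartbeats 2000000

lemma Gf_re_le {ε s N t t' : ℝ} {ζ : ℝ × ℝ} (hε : ε = 1 ∨ ε = -1) (hN : 10 ≤ N)
    (ht'0 : 0 ≤ t') (ht' : t' ≤ t) (hsm : t * N^4 ≤ 1/10000) (hζ : ζ ∈ SN N) (ζ₁ : ℝ × ℝ) :
    (Gf ε s N t t' ζ ζ₁).re ≤
      -(SP N ζ).indicator (fun _ => (N ^ (-(3/2) - s))^2 * N^2 / 40) ζ₁ := by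
  have hN0 : (0:ℝ) < N := by linarith
  have hN2 : (0:ℝ) ≤ N^2 := sq_nonneg N
  have hζT : ζ ∈ TN N := SN_subset_TN hN0.le hζ
  obtain ⟨⟨hs1, hs2⟩, hs3, hs4⟩ := hζ
  have hrepr := Gf_repr ε s N t t' ζ ζ₁ ht'0 ht'
  have hre : (Gf ε s N t t' ζ ζ₁).re
      = -((((2*Real.pi)^2)⁻¹ * (rphi s N ζ₁ * rphi s N (ζ - ζ₁)))
          * ((((ζ.1^2 : ℝ) : ℂ) - Complex.I * ((ζ.1/2 : ℝ) : ℂ)) *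
            Complex.exp (Complex.I * ((Phi ε t t' ζ ζ₁ : ℝ) : ℂ)
              - ((rr t t' ζ ζ₁ : ℝ) : ℂ))).re) := by
    rw [hrepr, Complex.neg_re, Complex.re_ofReal_mul]
  by_cases hmem : ζ₁ ∈ SP N ζ
  · -- main lower bound case
    obtain ⟨⟨hx1, hx2⟩, hy1, hy2⟩ := hmem
    have hA : ζ₁ ∈ AN N := by
      refine ⟨⟨hx1, by linarith⟩, ⟨by nlinarith, by nlinarith⟩⟩
    have hnB : ζ₁ ∉ BN N := fun h => by
      have := h.1.1
      linarith
    have hc1 : (ζ - ζ₁).1 = ζ.1 - ζ₁.1 := rfl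
    have hc2 : (ζ - ζ₁).2 = ζ.2 - ζ₁.2 := rfl
    have hB : ζ - ζ₁ ∈ BN N :=
      ⟨⟨by rw [hc1]; linarith, by rw [hc1]; linarith⟩,
        by rw [hc2]; linarith, by rw [hc2]; linarith⟩
    have hrA : rphi s N ζ₁ = N ^ (-(3/2) - s) := rphi_of_mem_A s N ζ₁ hA hnB
    have hrB : N ^ (-(3/2) - s) ≤ rphi s N (ζ - ζ₁) := rphi_of_mem_B s N hN0 _ hB
    have hΦ := Phi_abs_le hε hN ht'0 ht' hsm hζT (Or.inl hA) (Or.inr hB)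
    have hrr := rr_bounds hN ht'0 ht' hsm hζT (Or.inl hA) (Or.inr hB)
    have hre_ge := re_ge_key (ξ := ζ.1) (by linarith) hΦ hrr.1 hrr.2
    have hpos : (0:ℝ) < N ^ (-(3/2) - s) := Real.rpow_pos_of_pos hN0 _
    rw [hre, Set.indicator_of_mem (show ζ₁ ∈ SP N ζ from ⟨⟨hx1, hx2⟩, hy1, hy2⟩)]
    have hXre : (0:ℝ) ≤ ((((ζ.1^2 : ℝ) : ℂ) - Complex.I * ((ζ.1/2 : ℝ) : ℂ)) *
        Complex.exp (Complex.I * ((Phi ε t t' ζ ζ₁ : ℝ) : ℂ)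
          - ((rr t t' ζ ζ₁ : ℝ) : ℂ))).re := by nlinarith
    have hc2pi := c2pi_ge
    have hfac : (N ^ (-(3/2) - s))^2 / 40 ≤ ((2*Real.pi)^2)⁻¹ * (rphi s N ζ₁ * rphi s N (ζ - ζ₁)) := by
      rw [hrA]
      have h1 : (N ^ (-(3/2) - s))^2 ≤ N ^ (-(3/2) - s) * rphi s N (ζ - ζ₁) := by nlinarith
      nlinarith
    have hzsq : N^2 ≤ ζ.1^2/2 := by nlinarith
    apply neg_le_neg
    calc (N ^ (-(3/2) - s))^2 * N^2 / 40
        = ((N ^ (-(3/2) - s))^2/40) * N^2 := by ring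
      _ ≤ (((2*Real.pi)^2)⁻¹ * (rphi s N ζ₁ * rphi s N (ζ - ζ₁))) * (ζ.1^2/2) := by
          apply mul_le_mul hfac (by linarith) hN2
          exact mul_nonneg (by positivity) (mul_nonneg (rphi_nonneg s N hN0 _) (rphi_nonneg s N hN0 _))
      _ ≤ _ := by
          apply mul_le_mul_of_nonneg_left hre_ge
          exact mul_nonneg (by positivity) (mul_nonneg (rphi_nonneg s N hN0 _) (rphi_nonneg s N hN0 _))
  · rw [Set.indicator_of_notMem hmem, neg_zero]
    by_cases h1 : rphi s N ζ₁ = 0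
    · have : Hf ε s N t' ζ ζ₁ = 0 := by rw [Hf, phiNhat_eq, h1]; simp
      rw [Gf, this, mul_zero]
      simp
    by_cases h2 : rphi s N (ζ - ζ₁) = 0
    · have : Hf ε s N t' ζ ζ₁ = 0 := by rw [Hf, phiNhat_eq s N (ζ - ζ₁), h2]; simp
      rw [Gf, this, mul_zero]
      simp
    have hm1 := rphi_mem s N ζ₁ h1
    have hm2 := rphi_mem s N (ζ - ζ₁) h2
    have hΦ := Phi_abs_le hε hN ht'0 ht' hsm hζT hm1 hm2
    have hre_ge := re_nonneg_key (ξ := ζ.1) (rr t t' ζ ζ₁) (by linarith) hΦ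
    rw [hre]
    have hr1 := rphi_nonneg s N hN0 ζ₁
    have hr2 := rphi_nonneg s N hN0 (ζ - ζ₁)
    have hcp : (0:ℝ) ≤ ((2*Real.pi)^2)⁻¹ := by positivity
    apply neg_nonpos_of_nonneg
    apply mul_nonneg (by positivity)
    exact hre_ge

lemma integrable_Gf {ε s N t t' : ℝ} (hN : 2 ≤ N) (ζ : ℝ × ℝ) :
    Integrable (fun ζ₁ => Gf ε s N t t' ζ ζ₁) volume := by
  have h : (fun ζ₁ => Gf ε s N t t' ζ ζ₁)
      = fun ζ₁ => (eo ε t t' ζ * msym ζ.1 * (((2 * Real.pi) ^ 2 : ℝ) : ℂ)⁻¹)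
          * Hf ε s N t' ζ ζ₁ := rfl
  rw [h]
  exact (integrable_Hf hN t' ζ).const_mul _

lemma measurableSet_SP (N : ℝ) (ζ : ℝ × ℝ) : MeasurableSet (SP N ζ) :=
  measurableSet_Icc.prod measurableSet_Icc

lemma Kf_re_le {ε s N t t' : ℝ} {ζ : ℝ × ℝ} (hε : ε = 1 ∨ ε = -1) (hN : 10 ≤ N)
    (ht'0 : 0 ≤ t') (ht' : t' ≤ t) (hsm : t * N^4 ≤ 1/10000) (hζ : ζ ∈ SN N) :
    (Kf ε s N t t' ζ).re ≤ -((N ^ (-(3/2) - s))^2 * N^5 / 400) := by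
  have hN0 : (0:ℝ) < N := by linarith
  have hGint : Integrable (fun ζ₁ => Gf ε s N t t' ζ ζ₁) volume := integrable_Gf (by linarith) ζ
  have hre : (Kf ε s N t t' ζ).re = ∫ ζ₁ : ℝ × ℝ, (Gf ε s N t t' ζ ζ₁).re := by
    rw [Kf_eq_int]
    have h := integral_re (μ := (volume : Measure (ℝ × ℝ))) hGint
    simp only [RCLike.re_to_complex] at h
    exact h.symm
  rw [hre]
  have hint2 : Integrable (fun ζ₁ =>
      -(SP N ζ).indicator (fun _ => (N ^ (-(3/2) - s))^2 * N^2 / 40) ζ₁) volume :=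
    (integrable_ind _ (measurableSet_SP N ζ) (isCompact_Icc.prod isCompact_Icc) _).neg
  have hmono : ∫ ζ₁ : ℝ × ℝ, (Gf ε s N t t' ζ ζ₁).re
      ≤ ∫ ζ₁ : ℝ × ℝ, -(SP N ζ).indicator (fun _ => (N ^ (-(3/2) - s))^2 * N^2 / 40) ζ₁ := by
    apply integral_mono hGint.re hint2
    intro ζ₁
    exact Gf_re_le hε hN ht'0 ht' hsm hζ ζ₁
  obtain ⟨⟨hs1, hs2⟩, hs3, hs4⟩ := hζ
  have hvol : (volume (SP N ζ)).toReal = (ζ.1 - N - N/2) * N^2 := by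
    rw [SP, volume_prodIcc _ _ _ _ (by linarith) (by linarith)]
    ring_nf
  have hInd : ∫ ζ₁ : ℝ × ℝ, -(SP N ζ).indicator (fun _ => (N ^ (-(3/2) - s))^2 * N^2 / 40) ζ₁
      = -((ζ.1 - N - N/2) * N^2 * ((N ^ (-(3/2) - s))^2 * N^2 / 40)) := by
    rw [integral_neg, integral_indicator_const _ (measurableSet_SP N ζ), measureReal_def, hvol, smul_eq_mul]
  rw [hInd] at hmono
  refine hmono.trans (neg_le_neg ?_)
  have hpos : (0:ℝ) < N ^ (-(3/2) - s) := Real.rpow_pos_of_pos hN0 _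
  have h10 : N/10 ≤ ζ.1 - N - N/2 := by linarith
  calc (N ^ (-(3/2) - s))^2 * N^5 / 400
      = (N/10) * N^2 * ((N ^ (-(3/2) - s))^2 * N^2 / 40) := by ring
    _ ≤ (ζ.1 - N - N/2) * N^2 * ((N ^ (-(3/2) - s))^2 * N^2 / 40) := by
        apply mul_le_mul_of_nonneg_right _ (by positivity)
        apply mul_le_mul_of_nonneg_right h10 (sq_nonneg N)

end S17

namespace S17

set_option maxHeartbeats 2000000

lemma measurable_Hf_t (ε s N : ℝ) (ζ : ℝ × ℝ) :
    Measurable (fun q : ℝ × (ℝ × ℝ) => Hf ε s N q.1 ζ q.2) := by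
  unfold Hf
  have h1 : Measurable (fun q : ℝ × (ℝ × ℝ) => (q.1, q.2)) :=
    measurable_fst.prodMk measurable_snd
  have h2 : Measurable (fun q : ℝ × (ℝ × ℝ) => (q.1, ζ - q.2)) :=
    measurable_fst.prodMk (measurable_const.sub measurable_snd)
  exact (((measurable_e1_joint ε).comp h1).mul
      ((measurable_phiNhat s N).comp measurable_snd)).mul
    (((measurable_e1_joint ε).comp h2).mul
      ((measurable_phiNhat s N).comp (measurable_const.sub measurable_snd)))

lemma measurable_Kf_t (ε s N t : ℝ) (ζ : ℝ × ℝ) :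
    Measurable (fun t' : ℝ => Kf ε s N t t' ζ) := by
  unfold Kf
  have hinn : StronglyMeasurable (fun t' : ℝ => ∫ ζ₁ : ℝ × ℝ, Hf ε s N t' ζ ζ₁) :=
    (measurable_Hf_t ε s N ζ).stronglyMeasurable.integral_prod_right'
  have heo : Measurable (fun t' : ℝ => eo ε t t' ζ) := by
    unfold eo
    apply Complex.measurable_exp.comp
    apply Measurable.sub
    · exact (Complex.measurable_ofReal.comp
        ((measurable_const.sub measurable_id).mul_const _)).const_mul _
    · exact Complex.measurable_ofReal.comp
        (((measurable_const.sub measurable_id).abs).mul_const _)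
  exact (heo.mul_const _).mul (hinn.measurable.const_mul _)

lemma u2hat_re_le {ε s N t : ℝ} (hε : ε = 1 ∨ ε = -1) (hN : 10 ≤ N) (ht0 : 0 ≤ t)
    (hsm : t * N^4 ≤ 1/10000) {ζ : ℝ × ℝ} (hζ : ζ ∈ SN N) :
    (u2hat ε (phiNhat s N) t ζ).re ≤ -(t * ((N ^ (-(3/2) - s))^2 * N^5 / 400)) := by
  have hζT : ζ ∈ TN N := SN_subset_TN (by linarith) hζ
  have hμ : volume (Set.Ioc (0:ℝ) t) ≠ ⊤ := by simp [Real.volume_Ioc]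
  have hKint : IntegrableOn (fun t' => Kf ε s N t t' ζ) (Set.Ioc 0 t) volume :=
    Measure.integrableOn_of_bounded hμ (measurable_Kf_t ε s N t ζ).aestronglyMeasurable
      (ae_of_all _ fun x => norm_Kf_le (by linarith) x hζT)
  rw [u2hat_eq, intervalIntegral.integral_of_le ht0]
  have hre : (∫ t' in Set.Ioc (0:ℝ) t, Kf ε s N t t' ζ).re
      = ∫ t' in Set.Ioc (0:ℝ) t, (Kf ε s N t t' ζ).re := by
    have h := integral_re (μ := volume.restrict (Set.Ioc (0:ℝ) t)) hKint
    simp only [RCLike.re_to_complex] at h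
    exact h.symm
  rw [hre]
  have hmono : ∫ t' in Set.Ioc (0:ℝ) t, (Kf ε s N t t' ζ).re
      ≤ ∫ _t' in Set.Ioc (0:ℝ) t, -((N ^ (-(3/2) - s))^2 * N^5 / 400) :=
    setIntegral_mono_on hKint.re (integrableOn_const hμ)
      measurableSet_Ioc (fun x hx => Kf_re_le hε hN hx.1.le hx.2 hsm hζ)
  rw [setIntegral_const, measureReal_def, Real.volume_Ioc, sub_zero, ENNReal.toReal_ofReal ht0,
    smul_eq_mul] at hmono
  linarith

lemma norm_u2hat_ge {ε s N t : ℝ} (hε : ε = 1 ∨ ε = -1) (hN : 10 ≤ N) (ht0 : 0 ≤ t)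
    (hsm : t * N^4 ≤ 1/10000) {ζ : ℝ × ℝ} (hζ : ζ ∈ SN N) :
    t * ((N ^ (-(3/2) - s))^2 * N^5 / 400) ≤ ‖u2hat ε (phiNhat s N) t ζ‖ := by
  have h := u2hat_re_le hε hN ht0 hsm hζ (s := s)
  calc t * ((N ^ (-(3/2) - s))^2 * N^5 / 400)
      ≤ -((u2hat ε (phiNhat s N) t ζ).re) := by linarith
    _ ≤ |(u2hat ε (phiNhat s N) t ζ).re| := neg_le_abs _
    _ ≤ ‖u2hat ε (phiNhat s N) t ζ‖ := Complex.abs_re_le_norm _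
    _ = ‖u2hat ε (phiNhat s N) t ζ‖ := rfl

end S17

namespace S17

set_option maxHeartbeats 2000000

lemma rpow_le_max {a x b p : ℝ} (ha : 0 < a) (h1 : a ≤ x) (h2 : x ≤ b) :
    x ^ p ≤ max (a ^ p) (b ^ p) := by
  rcases le_or_gt 0 p with hp | hp
  · exact le_max_of_le_right (Real.rpow_le_rpow (by linarith) h2 hp)
  · exact le_max_of_le_left (Real.rpow_le_rpow_of_nonpos ha h1 hp.le)

lemma rpow_ge_min {a x b p : ℝ} (ha : 0 < a) (h1 : a ≤ x) (h2 : x ≤ b) :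
    min (a ^ p) (b ^ p) ≤ x ^ p := by
  rcases le_or_gt 0 p with hp | hp
  · exact le_trans (min_le_left _ _) (Real.rpow_le_rpow ha.le h1 hp)
  · exact le_trans (min_le_right _ _)
      (Real.rpow_le_rpow_of_nonpos (lt_of_lt_of_le ha h1) h2 hp.le)

lemma jb_pos (x : ℝ) : 0 < jb x := by unfold jb; positivity

lemma measurableSet_TN (N : ℝ) : MeasurableSet (TN N) :=
  measurableSet_Icc.prod measurableSet_Icc

lemma measurableSet_SN (N : ℝ) : MeasurableSet (SN N) :=
  measurableSet_Icc.prod measurableSet_Icc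

lemma integral_W_ge {ε s N t : ℝ} (hε : ε = 1 ∨ ε = -1) (hN : 10 ≤ N) (ht0 : 0 ≤ t)
    (hsm : t * N^4 ≤ 1/10000) :
    min (N^(2*s)) ((2*N)^(2*s)) * (t * ((N ^ (-(3/2) - s))^2 * N^5 / 400))^2 * (N^3/10)
      ≤ ∫ ζ : ℝ × ℝ, jb ζ.1 ^ (2*s) * ‖u2hat ε (phiNhat s N) t ζ‖^2 := by
  have hN0 : (0:ℝ) < N := by linarith
  set u : ℝ × ℝ → ℂ := fun ζ => u2hat ε (phiNhat s N) t ζ with hu_def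
  set W : ℝ × ℝ → ℝ := fun ζ => jb ζ.1 ^ (2*s) * ‖u ζ‖^2 with hW_def
  have hW_nonneg : ∀ ζ, 0 ≤ W ζ := fun ζ => by
    have := (jb_pos ζ.1).le
    have h2 : (0:ℝ) ≤ jb ζ.1 ^ (2*s) := Real.rpow_nonneg this _
    positivity
  have hjb_cont : Continuous (fun ζ : ℝ × ℝ => jb ζ.1 ^ (2*s)) := by
    have h1 : Continuous (fun ζ : ℝ × ℝ => jb ζ.1) := by
      unfold jb
      exact continuous_const.add (continuous_abs.comp continuous_fst)
    exact h1.rpow_const (fun ζ => Or.inl (ne_of_gt (jb_pos ζ.1)))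
  have hu_meas : AEStronglyMeasurable u volume := aemeasurable_u2hat ε s N t ht0
  have hn2 : AEStronglyMeasurable (fun ζ => ‖u ζ‖^2) volume :=
    (hu_meas.norm.mul hu_meas.norm).congr
      (Filter.Eventually.of_forall (fun ζ => (pow_two ‖u ζ‖).symm))
  have hW_meas : AEStronglyMeasurable W volume := hjb_cont.aestronglyMeasurable.mul hn2
  have hTNvol : volume (TN N) ≠ ⊤ :=
    lt_top_iff_ne_top.mp (volume_prodIcc_lt_top _ _ _ _)
  set CB : ℝ := 18*N^2 * (2 * (N ^ (-(3/2) - s))^2 * (7 * N^3)) * t with hCB_def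
  have hCB0 : 0 ≤ CB := by
    have : (0:ℝ) < N ^ (-(3/2) - s) := Real.rpow_pos_of_pos hN0 _
    positivity
  have hIntT : IntegrableOn W (TN N) volume := by
    apply Measure.integrableOn_of_bounded hTNvol hW_meas
      (M := max ((1+N) ^ (2*s)) ((1+4*N) ^ (2*s)) * CB^2)
    rw [ae_restrict_iff' (measurableSet_TN N)]
    apply ae_of_all
    intro ζ hζ
    obtain ⟨⟨hz1, hz2⟩, _⟩ := hζ
    have hjb_val : jb ζ.1 = 1 + ζ.1 := by
      unfold jb; rw [abs_of_nonneg (by linarith)]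
    have hjb_le : jb ζ.1 ^ (2*s) ≤ max ((1+N) ^ (2*s)) ((1+4*N) ^ (2*s)) := by
      rw [hjb_val]
      exact rpow_le_max (by linarith) (by linarith) (by linarith)
    have hnorm_le : ‖u ζ‖^2 ≤ CB^2 := by
      apply pow_le_pow_left₀ (norm_nonneg _) _ 2
      exact norm_u2hat_le (by linarith) ht0 ⟨⟨hz1, hz2⟩, ‹_›⟩
    have hjb_nn : (0:ℝ) ≤ jb ζ.1 ^ (2*s) := Real.rpow_nonneg (jb_pos ζ.1).le _
    rw [Real.norm_eq_abs, abs_of_nonneg (hW_nonneg ζ)]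
    calc W ζ = jb ζ.1 ^ (2*s) * ‖u ζ‖^2 := rfl
      _ ≤ max ((1+N) ^ (2*s)) ((1+4*N) ^ (2*s)) * CB^2 := by
          apply mul_le_mul hjb_le hnorm_le (sq_nonneg _)
          exact le_trans hjb_nn hjb_le
  have hW_supp : ∀ ζ ∉ TN N, W ζ = 0 := by
    intro ζ hζ
    have : u ζ = 0 := u2hat_zero hN0 hζ
    simp [hW_def, this]
  have h_eq : ∫ ζ : ℝ × ℝ, W ζ = ∫ ζ in TN N, W ζ := by
    have hind : (TN N).indicator W = W := by
      funext ζ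
      by_cases h : ζ ∈ TN N
      · simp [Set.indicator_of_mem h]
      · simp [Set.indicator_of_notMem h, hW_supp ζ h]
    rw [← hind, integral_indicator (measurableSet_TN N)]
    simp [hind]
  have hmono1 : ∫ ζ in SN N, W ζ ≤ ∫ ζ in TN N, W ζ :=
    setIntegral_mono_set hIntT (Filter.Eventually.of_forall hW_nonneg)
      (HasSubset.Subset.eventuallyLE (SN_subset_TN hN0.le))
  set c₀ : ℝ := min (N^(2*s)) ((2*N)^(2*s)) * (t * ((N ^ (-(3/2) - s))^2 * N^5 / 400))^2
    with hc₀_def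
  have hc₀0 : 0 ≤ c₀ := by
    apply mul_nonneg _ (sq_nonneg _)
    exact le_min (Real.rpow_nonneg hN0.le _) (Real.rpow_nonneg (by linarith) _)
  have hSNvol : volume (SN N) ≠ ⊤ := lt_top_iff_ne_top.mp (volume_prodIcc_lt_top _ _ _ _)
  have hconst : c₀ * (volume (SN N)).toReal ≤ ∫ ζ in SN N, W ζ := by
    apply setIntegral_ge_of_const_le_real (measurableSet_SN N) hSNvol
    · intro ζ hζ
      obtain ⟨⟨hs1, hs2⟩, _⟩ := hζ
      have hjb_val : jb ζ.1 = 1 + ζ.1 := by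
        unfold jb; rw [abs_of_nonneg (by linarith)]
      have hjb_ge : min (N^(2*s)) ((2*N)^(2*s)) ≤ jb ζ.1 ^ (2*s) := by
        rw [hjb_val]
        exact rpow_ge_min hN0 (by linarith) (by linarith)
      have hD0 : 0 ≤ t * ((N ^ (-(3/2) - s))^2 * N^5 / 400) := by
        have : (0:ℝ) < N ^ (-(3/2) - s) := Real.rpow_pos_of_pos hN0 _
        positivity
      have hnorm_ge : (t * ((N ^ (-(3/2) - s))^2 * N^5 / 400))^2 ≤ ‖u ζ‖^2 := by
        apply pow_le_pow_left₀ hD0 _ 2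
        exact norm_u2hat_ge hε hN ht0 hsm ⟨⟨hs1, hs2⟩, ‹_›⟩
      calc c₀ ≤ (jb ζ.1 ^ (2*s)) * ‖u ζ‖^2 := by
            apply mul_le_mul hjb_ge hnorm_ge (sq_nonneg _)
            exact le_trans (le_min (Real.rpow_nonneg hN0.le _)
              (Real.rpow_nonneg (by linarith) _)) hjb_ge
        _ = W ζ := rfl
    · exact hIntT.mono_set (SN_subset_TN hN0.le)
  have hvolSN : (volume (SN N)).toReal = (19*N/10 - 8*N/5) * (14*N^2/5 - 11*N^2/5) := by
    rw [SN, volume_prodIcc _ _ _ _ (by linarith) (by nlinarith)]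
  have hvol_ge : N^3/10 ≤ (volume (SN N)).toReal := by
    rw [hvolSN]; nlinarith
  calc min (N^(2*s)) ((2*N)^(2*s)) * (t * ((N ^ (-(3/2) - s))^2 * N^5 / 400))^2 * (N^3/10)
      = c₀ * (N^3/10) := rfl
    _ ≤ c₀ * (volume (SN N)).toReal := by
        apply mul_le_mul_of_nonneg_left hvol_ge hc₀0
    _ ≤ ∫ ζ in SN N, W ζ := hconst
    _ ≤ ∫ ζ in TN N, W ζ := hmono1
    _ = ∫ ζ : ℝ × ℝ, W ζ := h_eq.symm
    _ = ∫ ζ : ℝ × ℝ, jb ζ.1 ^ (2*s) * ‖u2hat ε (phiNhat s N) t ζ‖^2 := rfl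

end S17

theorem stmt17 (ε s ϵ : ℝ) (hε : ε = 1 ∨ ε = -1) (hϵ0 : 0 < ϵ) (hϵ : ϵ < 1 / 2) :
    ∃ c > 0, ∃ N₀ : ℝ, 1 ≤ N₀ ∧ ∀ N : ℝ, N₀ ≤ N →
      c * N ^ (-s - 1 / 2 - ϵ) ≤
        HNormF s 0 (u2hat ε (phiNhat s N) (N ^ (-(4 : ℝ) - ϵ))) := by
  classical
  set m : ℝ := min 1 ((2:ℝ)^(2*s)) with hm_def
  have hm0 : 0 < m := lt_min one_pos (Real.rpow_pos_of_pos two_pos _)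
  refine ⟨Real.sqrt (m/1600000), Real.sqrt_pos.mpr (by positivity),
    max 10 ((100000:ℝ)^(1/ϵ)), le_trans (by norm_num) (le_max_left _ _), ?_⟩
  intro N hNmax
  have hN10 : (10:ℝ) ≤ N := le_trans (le_max_left _ _) hNmax
  have hN0 : (0:ℝ) < N := by linarith
  set t : ℝ := N ^ (-(4:ℝ) - ϵ) with ht_def
  have ht0 : 0 ≤ t := Real.rpow_nonneg hN0.le _
  have hNϵ : (100000:ℝ) ≤ N ^ ϵ := by
    have hb : (0:ℝ) ≤ (100000:ℝ)^(1/ϵ) := Real.rpow_nonneg (by norm_num) _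
    have h1 : ((100000:ℝ)^(1/ϵ)) ^ ϵ ≤ N ^ ϵ :=
      Real.rpow_le_rpow hb (le_trans (le_max_right _ _) hNmax) hϵ0.le
    rwa [← Real.rpow_mul (by norm_num), one_div_mul_cancel (ne_of_gt hϵ0),
      Real.rpow_one] at h1
  have htN4 : t * N^4 = N ^ (-ϵ) := by
    rw [ht_def, ← Real.rpow_natCast N 4, ← Real.rpow_add hN0]
    congr 1
    push_cast
    ring
  have hsm : t * N^4 ≤ 1/10000 := by
    rw [htN4, Real.rpow_neg hN0.le]
    have h2 : (0:ℝ) < N ^ ϵ := Real.rpow_pos_of_pos hN0 _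
    calc (N^ϵ)⁻¹ ≤ ((10000:ℝ))⁻¹ := by
          apply inv_anti₀ (by norm_num)
          linarith
      _ = 1/10000 := by norm_num
  have hkey := S17.integral_W_ge (ε := ε) (s := s) (t := t) hε hN10 ht0 hsm
  have hHN : HNormF s 0 (u2hat ε (phiNhat s N) t)
      = Real.sqrt (∫ ζ : ℝ × ℝ, jb ζ.1 ^ (2*s) * ‖u2hat ε (phiNhat s N) t ζ‖^2) := by
    unfold HNormF
    congr 1
    rw [show (fun ζ : ℝ × ℝ => jb ζ.1 ^ (2*s) * jb ζ.2 ^ (2*(0:ℝ)) * ‖u2hat ε (phiNhat s N) t ζ‖^2)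
        = fun ζ : ℝ × ℝ => jb ζ.1 ^ (2*s) * ‖u2hat ε (phiNhat s N) t ζ‖^2 from
      funext fun ζ => by norm_num]
  have hsq2 : (N ^ (-(3/2) - s))^2 = N ^ (-3 - 2*s) := by
    rw [← Real.rpow_natCast (N ^ (-(3/2) - s)) 2, ← Real.rpow_mul hN0.le]
    congr 1
    push_cast
    ring
  have hmid : t * ((N ^ (-(3/2) - s))^2 * N^5 / 400) = N ^ (-2 - 2*s - ϵ) / 400 := by
    rw [hsq2, ht_def, ← Real.rpow_natCast N 5]
    rw [show N ^ (-(4:ℝ)-ϵ) * (N ^ (-3-2*s) * N^((5:ℕ):ℝ) / 400)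
        = N ^ (-(4:ℝ)-ϵ) * N ^ (-3-2*s) * N^((5:ℕ):ℝ) / 400 from by ring]
    rw [← Real.rpow_add hN0, ← Real.rpow_add hN0]
    congr 2
    push_cast
    ring
  have hmid_sq : (N ^ (-2 - 2*s - ϵ)/400)^2 = N ^ (-4 - 4*s - 2*ϵ)/160000 := by
    rw [div_pow, ← Real.rpow_natCast (N ^ (-2 - 2*s - ϵ)) 2, ← Real.rpow_mul hN0.le]
    norm_num
    congr 1
    ring
  have hmin_ge : m * N^(2*s) ≤ min (N^(2*s)) ((2*N)^(2*s)) := by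
    have h2N : (2*N)^(2*s) = 2^(2*s) * N^(2*s) := Real.mul_rpow (by norm_num) hN0.le
    have hNp : (0:ℝ) < N^(2*s) := Real.rpow_pos_of_pos hN0 _
    have h2p : (0:ℝ) < (2:ℝ)^(2*s) := Real.rpow_pos_of_pos two_pos _
    apply le_min
    · nlinarith [min_le_left 1 ((2:ℝ)^(2*s))]
    · rw [h2N]
      nlinarith [min_le_right 1 ((2:ℝ)^(2*s))]
  have hcomb : N^(2*s) * N ^ (-4 - 4*s - 2*ϵ) * N^((3:ℕ):ℝ) = N ^ (-2*s - 1 - 2*ϵ) := by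
    rw [← Real.rpow_add hN0, ← Real.rpow_add hN0]
    congr 1
    push_cast
    ring
  have hLHS : (Real.sqrt (m/1600000) * N ^ (-s - 1/2 - ϵ))^2
      = (m/1600000) * N ^ (-2*s - 1 - 2*ϵ) := by
    rw [mul_pow, Real.sq_sqrt (by positivity),
      ← Real.rpow_natCast (N ^ (-s - 1/2 - ϵ)) 2, ← Real.rpow_mul hN0.le]
    congr 2
    push_cast
    ring
  have hfin : (Real.sqrt (m/1600000) * N ^ (-s - 1/2 - ϵ))^2
      ≤ min (N^(2*s)) ((2*N)^(2*s)) * (t * ((N ^ (-(3/2) - s))^2 * N^5 / 400))^2 * (N^3/10) := by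
    rw [hLHS]
    have hrest0 : (0:ℝ) ≤ N ^ (-4 - 4*s - 2*ϵ)/160000 := by positivity
    have h3 : (0:ℝ) ≤ N^((3:ℕ):ℝ)/10 := by positivity
    calc (m/1600000) * N ^ (-2*s - 1 - 2*ϵ)
        = m * N^(2*s) * (N ^ (-4 - 4*s - 2*ϵ)/160000) * (N^((3:ℕ):ℝ)/10) := by
          rw [← hcomb]; ring
      _ ≤ min (N^(2*s)) ((2*N)^(2*s)) * (N ^ (-4 - 4*s - 2*ϵ)/160000) * (N^((3:ℕ):ℝ)/10) := by
          apply mul_le_mul_of_nonneg_right (mul_le_mul_of_nonneg_right hmin_ge hrest0) h3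
      _ = min (N^(2*s)) ((2*N)^(2*s)) * (t * ((N ^ (-(3/2) - s))^2 * N^5 / 400))^2 * (N^3/10) := by
          rw [hmid, hmid_sq, Real.rpow_natCast]
  rw [hHN]
  have h1 : Real.sqrt (m/1600000) * N ^ (-s - 1/2 - ϵ)
      = Real.sqrt ((Real.sqrt (m/1600000) * N ^ (-s - 1/2 - ϵ))^2) := by
    rw [Real.sqrt_sq]
    positivity
  rw [h1]
  exact Real.sqrt_le_sqrt (le_trans hfin hkey)

end
end
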